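/- For the scalar Riccati solution Π_M with terminal condition Π_M(T) = M: dividing the Riccati equation dΠ/dt = (b²/r)Π² − 2aΠ − q by Π (assuming Π_M(t) ≥ C > 0 on [0,T] for a constant C independent of M > 1) and integrating gives log M − log Π_M(0) = (b²/r)∫₀^T Π_M(τ)dτ − 2aT − q∫₀^T (1/Π_M(τ))dτ; consequently (∫₀^T Π_M(τ)dτ)/log M → r/b² as M → ∞. -/
import Mathlib


open Set Filter Topology intervalIntegral

/-- Integral identity for the scalar Riccati solution `Π_M` with `Π_M(T) = M`,
obtained by dividing the Riccati equation by `Π_M` and integrating, and the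
resulting asymptotics `(∫₀^T Π_M)/log M → r/b²` as `M → ∞`. -/
theorem stmt_13 (a b q r T : ℝ) (hb : b ≠ 0) (hr : 0 < r) (hq : 0 ≤ q)
    (hT : 0 < T)
    (Pi : ℝ → ℝ → ℝ)
    (hRic : ∀ M > (1 : ℝ), ∀ t ∈ Icc (0 : ℝ) T,
      HasDerivAt (Pi M) (b ^ 2 / r * (Pi M t) ^ 2 - 2 * a * Pi M t - q) t)
    (hPiT : ∀ M > (1 : ℝ), Pi M T = M)
    (C : ℝ) (hC : 0 < C)
    (hlow : ∀ M > (1 : ℝ), ∀ t ∈ Icc (0 : ℝ) T, C ≤ Pi M t)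
    (D : ℝ) (hup : ∀ M > (1 : ℝ), Pi M 0 ≤ D) :
    (∀ M > (1 : ℝ),
      Real.log M - Real.log (Pi M 0) =
        b ^ 2 / r * (∫ τ in (0 : ℝ)..T, Pi M τ) - 2 * a * T
          - q * ∫ τ in (0 : ℝ)..T, 1 / Pi M τ) ∧
    Tendsto (fun M => (∫ τ in (0 : ℝ)..T, Pi M τ) / Real.log M) atTop
      (𝓝 (r / b ^ 2)) := by
  have hIcc : uIcc (0:ℝ) T = Icc 0 T := uIcc_of_le hT.le
  -- per-M facts
  have hpos : ∀ M > (1:ℝ), ∀ t ∈ Icc (0:ℝ) T, 0 < Pi M t :=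
    fun M hM t ht => lt_of_lt_of_le hC (hlow M hM t ht)
  have hcont : ∀ M > (1:ℝ), ContinuousOn (Pi M) (Icc 0 T) := fun M hM t ht =>
    ((hRic M hM t ht).continuousAt).continuousWithinAt
  have hiPi : ∀ M > (1:ℝ), IntervalIntegrable (Pi M) MeasureTheory.volume 0 T := by
    intro M hM
    apply ContinuousOn.intervalIntegrable
    rw [hIcc]; exact hcont M hM
  have hiInv : ∀ M > (1:ℝ),
      IntervalIntegrable (fun t => 1 / Pi M t) MeasureTheory.volume 0 T := by
    intro M hM
    apply ContinuousOn.intervalIntegrable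
    rw [hIcc]
    exact continuousOn_const.div (hcont M hM) (fun t ht => ne_of_gt (hpos M hM t ht))
  have key : ∀ M > (1:ℝ),
      Real.log M - Real.log (Pi M 0) =
        b ^ 2 / r * (∫ τ in (0:ℝ)..T, Pi M τ) - 2 * a * T
          - q * ∫ τ in (0:ℝ)..T, 1 / Pi M τ := by
    intro M hM
    have hderivLog : ∀ t ∈ uIcc (0:ℝ) T,
        HasDerivAt (fun s => Real.log (Pi M s))
          (b ^ 2 / r * Pi M t - 2 * a - q * (1 / Pi M t)) t := by
      intro t ht
      rw [hIcc] at ht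
      have hne := ne_of_gt (hpos M hM t ht)
      have h1 := (hRic M hM t ht).log hne
      convert h1 using 1
      field_simp
    have hint : IntervalIntegrable
        (fun t => b ^ 2 / r * Pi M t - 2 * a - q * (1 / Pi M t))
        MeasureTheory.volume 0 T := by
      apply IntervalIntegrable.sub
      apply IntervalIntegrable.sub
      · exact (hiPi M hM).const_mul _
      · exact intervalIntegrable_const
      · exact (hiInv M hM).const_mul _
    have heq := integral_eq_sub_of_hasDerivAt hderivLog hint
    rw [hPiT M hM] at heq
    rw [intervalIntegral.integral_sub ((((hiPi M hM).const_mul _).sub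
        intervalIntegrable_const)) ((hiInv M hM).const_mul _),
      intervalIntegral.integral_sub ((hiPi M hM).const_mul _) intervalIntegrable_const,
      intervalIntegral.integral_const, smul_eq_mul,
      intervalIntegral.integral_const_mul (b ^ 2 / r) (Pi M),
      intervalIntegral.integral_const_mul q (fun t => 1 / Pi M t)] at heq
    rw [← heq]; ring
  refine ⟨key, ?_⟩
  have hb2 : (0:ℝ) < b ^ 2 := by positivity
  -- bound on the inverse integral
  have hInvBound : ∀ M > (1:ℝ),
      (∫ τ in (0:ℝ)..T, 1 / Pi M τ) ∈ Icc 0 (T / C) := by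
    intro M hM
    constructor
    · apply intervalIntegral.integral_nonneg hT.le
      exact fun t ht => div_nonneg zero_le_one (le_of_lt (hpos M hM t ht))
    · have := intervalIntegral.integral_mono_on hT.le (hiInv M hM)
        (_root_.intervalIntegrable_const (c := 1 / C))
        (fun t ht => one_div_le_one_div_of_le hC (hlow M hM t ht))
      simpa [div_eq_mul_inv, mul_comm] using this
  set K : ℝ := |Real.log C| + |Real.log D| + |2 * a * T| + q * (T / C) with hK
  have hKnn : 0 ≤ K := by
    have : 0 ≤ q * (T / C) := by positivity
    positivity
  have hE : ∀ M > (1:ℝ),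
      |(∫ τ in (0:ℝ)..T, Pi M τ) / Real.log M - r / b ^ 2|
        ≤ r / b ^ 2 * K / Real.log M := by
    intro M hM
    have hlogM : 0 < Real.log M := Real.log_pos hM
    set E : ℝ := -Real.log (Pi M 0) + 2 * a * T + q * ∫ τ in (0:ℝ)..T, 1 / Pi M τ with hEdef
    have hPiInt : (∫ τ in (0:ℝ)..T, Pi M τ) = r / b ^ 2 * (Real.log M + E) := by
      have h := key M hM
      have h1 : b ^ 2 / r * (∫ τ in (0:ℝ)..T, Pi M τ) = Real.log M + E := by
        rw [hEdef]; linarith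
      have h2 : (∫ τ in (0:ℝ)..T, Pi M τ)
          = r / b ^ 2 * (b ^ 2 / r * (∫ τ in (0:ℝ)..T, Pi M τ)) := by
        field_simp
      rw [h2, h1]
    have hEbound : |E| ≤ K := by
      have hP0 : Pi M 0 ∈ Icc C D := ⟨hlow M hM 0 ⟨le_refl 0, hT.le⟩, hup M hM⟩
      have hlogP0 : |Real.log (Pi M 0)| ≤ |Real.log C| + |Real.log D| := by
        have h1 : Real.log C ≤ Real.log (Pi M 0) := Real.log_le_log hC hP0.1
        have h2 : Real.log (Pi M 0) ≤ Real.log D :=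
          Real.log_le_log (lt_of_lt_of_le hC hP0.1) hP0.2
        rw [abs_le]
        constructor
        · have := neg_abs_le (Real.log C)
          have h3 : (0:ℝ) ≤ |Real.log D| := abs_nonneg _
          linarith
        · have := le_abs_self (Real.log D)
          have h3 : (0:ℝ) ≤ |Real.log C| := abs_nonneg _
          linarith
      have hInv := hInvBound M hM
      have hqi : |q * ∫ τ in (0:ℝ)..T, 1 / Pi M τ| ≤ q * (T / C) := by
        rw [abs_of_nonneg (mul_nonneg hq hInv.1)]
        exact mul_le_mul_of_nonneg_left hInv.2 hq
      calc |E| ≤ |Real.log (Pi M 0)| + |2 * a * T|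
            + |q * ∫ τ in (0:ℝ)..T, 1 / Pi M τ| := by
              rw [hEdef]
              calc |-Real.log (Pi M 0) + 2 * a * T + q * ∫ τ in (0:ℝ)..T, 1 / Pi M τ|
                  ≤ |-Real.log (Pi M 0) + 2 * a * T| + |q * ∫ τ in (0:ℝ)..T, 1 / Pi M τ| :=
                    abs_add_le _ _
                _ ≤ |-Real.log (Pi M 0)| + |2 * a * T| + |q * ∫ τ in (0:ℝ)..T, 1 / Pi M τ| := by
                    have := abs_add_le (-Real.log (Pi M 0)) (2 * a * T)
                    linarith
                _ = |Real.log (Pi M 0)| + |2 * a * T| + |q * ∫ τ in (0:ℝ)..T, 1 / Pi M τ| := by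
                    rw [abs_neg]
        _ ≤ K := by rw [hK]; linarith
    have : (∫ τ in (0:ℝ)..T, Pi M τ) / Real.log M - r / b ^ 2
        = r / b ^ 2 * E / Real.log M := by
      rw [hPiInt]
      field_simp
      ring
    rw [this, abs_div, abs_of_pos hlogM, abs_mul,
      abs_of_nonneg (le_of_lt (by positivity : (0:ℝ) < r / b ^ 2))]
    gcongr
  have h0 : Tendsto (fun M : ℝ => r / b ^ 2 * K / Real.log M) atTop (𝓝 0) :=
    Tendsto.div_atTop tendsto_const_nhds Real.tendsto_log_atTop
  have hdiff : Tendsto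
      (fun M => (∫ τ in (0:ℝ)..T, Pi M τ) / Real.log M - r / b ^ 2) atTop (𝓝 0) := by
    apply squeeze_zero_norm' _ h0
    filter_upwards [eventually_gt_atTop (1:ℝ)] with M hM
    simpa [Real.norm_eq_abs] using hE M hM
  have hfin := hdiff.add_const (r / b ^ 2)
  simpa using hfin
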